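/- Let S be a commutative semiring, n ≥ 2, and suppose M_n(S) is bi-ideal-free. Then the standard quasiordering ≤_S on S is downwards directed: for all a, b ∈ S there exists c ∈ S with c ≤_S a and c ≤_S b. -/

import Mathlib

/-- A semiring in the sense of the paper: associative `+` and `*`, `+` commutative,
`*` distributing over `+` from both sides; no zero or unity assumed. -/
class PSemiring (S : Type) extends AddCommSemigroup S, Semigroup S where
  left_distrib : ∀ a b c : S, a * (b + c) = a * b + a * c
  right_distrib : ∀ a b c : S, (a + b) * c = a * c + b * c

section Defs
variable {T : Type} [Add T] [Mul T]

def MulAbsorbing (w : T) : Prop := ∀ a : T, a * w = w ∧ w * a = w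
def AddAbsorbing (w : T) : Prop := ∀ a : T, a + w = w
def AddNeutral (w : T) : Prop := ∀ a : T, a + w = a
def BiAbsorbing (w : T) : Prop := MulAbsorbing w ∧ AddAbsorbing w
def IsZero (w : T) : Prop := MulAbsorbing w ∧ AddNeutral w
def IsUnity (w : T) : Prop := ∀ a : T, w * a = a ∧ a * w = a

def IsBiIdeal (I : Set T) : Prop :=
  I.Nonempty ∧ ∀ a ∈ I, ∀ s : T, a + s ∈ I ∧ a * s ∈ I ∧ s * a ∈ I

def IsCongruence (r : T → T → Prop) : Prop :=
  Equivalence r ∧ (∀ a b c d : T, r a b → r c d → r (a + c) (b + d)) ∧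
    (∀ a b c d : T, r a b → r c d → r (a * c) (b * d))

/-- The standard quasiordering on a semiring. -/
def leS (a b : T) : Prop := a = b ∨ ∃ c : T, a + c = b

/-- `addPow m b` is the `(m+1)`-fold sum `b + ⋯ + b`. -/
def addPow : ℕ → T → T
  | 0, b => b
  | m + 1, b => addPow m b + b

end Defs

def CongSimple (T : Type) [Add T] [Mul T] : Prop :=
  (∃ a b : T, a ≠ b) ∧
    ∀ r : T → T → Prop, IsCongruence r →
      (∀ a b : T, r a b ↔ a = b) ∨ (∀ a b : T, r a b)

def BiIdealSimple (T : Type) [Add T] [Mul T] : Prop :=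
  (∃ a b : T, a ≠ b) ∧
    ∀ I : Set T, IsBiIdeal I → (∃ w : T, I = {w}) ∨ I = Set.univ

def BiIdealFree (T : Type) [Add T] [Mul T] : Prop :=
  (∃ a b : T, a ≠ b) ∧ ∀ I : Set T, IsBiIdeal I → I = Set.univ

/-- Sum of a nonempty family indexed by `Fin (n+1)`. -/
def finSum {S : Type} [Add S] : ∀ {n : ℕ}, (Fin (n + 1) → S) → S
  | 0, f => f 0
  | n + 1, f => finSum (fun i : Fin (n + 1) => f i.castSucc) + f (Fin.last (n + 1))

/-- `Mat n S` is the semiring of `(n+1) × (n+1)` matrices over `S`. -/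
structure Mat (n : ℕ) (S : Type) where
  entry : Fin (n + 1) → Fin (n + 1) → S

instance {n : ℕ} {S : Type} [Add S] : Add (Mat n S) :=
  ⟨fun A B => ⟨fun i j => A.entry i j + B.entry i j⟩⟩

instance {n : ℕ} {S : Type} [Add S] [Mul S] : Mul (Mat n S) :=
  ⟨fun A B => ⟨fun i j => finSum (fun k => A.entry i k * B.entry k j)⟩⟩

/-- The constant matrix `ā`. -/
def Mat.const (n : ℕ) {S : Type} (a : S) : Mat n S := ⟨fun _ _ => a⟩

/-!
Since `M_n(S)` is bi-ideal-free, the set of matrices lying above some product `M * A * M'` is all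
of `M_n(S)`, for any `A`. Take `A` with `a` on the diagonal and `b` elsewhere, and let `B` have
`a` in the corner `(0,0)` and `b` elsewhere. Comparing entries of `M * A * M' ≤ B` gives four
inequalities `p a q ≤ b`, `r b s ≤ a`, `p a s ≤ b`, `r b q ≤ b` between elements of `S`, and by
commutativity `p a q r s` lies below both `a` and `b`.
-/

section LeS

theorem leS_refl {T : Type} [Add T] [Mul T] (a : T) : leS a a := Or.inl rfl

theorem leS_add_right {T : Type} [Add T] [Mul T] (a c : T) : leS a (a + c) := Or.inr ⟨c, rfl⟩

theorem leS_trans {T : Type} [AddSemigroup T] [Mul T] {a b c : T} :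
    leS a b → leS b c → leS a c := by
  rintro (rfl | ⟨x, rfl⟩) hbc
  · exact hbc
  · rcases hbc with rfl | ⟨y, rfl⟩
    · exact leS_add_right a x
    · exact Or.inr ⟨x + y, (add_assoc a x y).symm⟩

variable {S : Type} [PSemiring S]

theorem leS_mul_right {a b : S} (h : leS a b) (c : S) : leS (a * c) (b * c) := by
  rcases h with rfl | ⟨x, rfl⟩
  · exact leS_refl _
  · exact Or.inr ⟨x * c, (PSemiring.right_distrib a x c).symm⟩

theorem leS_mul_left {a b : S} (h : leS a b) (c : S) : leS (c * a) (c * b) := by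
  rcases h with rfl | ⟨x, rfl⟩
  · exact leS_refl _
  · exact Or.inr ⟨c * x, (PSemiring.left_distrib c a x).symm⟩

end LeS

section FinSum

theorem leS_finSum {S : Type} [AddCommSemigroup S] [Mul S] :
    ∀ {m : ℕ} (f : Fin (m + 1) → S) (k : Fin (m + 1)), leS (f k) (finSum f)
  | 0, f, k => by
    rw [Fin.fin_one_eq_zero k]
    exact leS_refl _
  | m + 1, f, k => by
    cases k using Fin.lastCases with
    | last => exact Or.inr ⟨finSum fun i : Fin (m + 1) => f i.castSucc, add_comm _ _⟩
    | cast i => exact leS_trans (leS_finSum (fun i => f i.castSucc) i) (leS_add_right _ _)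

theorem finSum_add {S : Type} [AddCommSemigroup S] : ∀ {m : ℕ} (f g : Fin (m + 1) → S),
    finSum (fun i => f i + g i) = finSum f + finSum g
  | 0, _, _ => rfl
  | m + 1, f, g => by
    change finSum (fun i : Fin (m + 1) => f i.castSucc + g i.castSucc) + _ =
      (finSum fun i : Fin (m + 1) => f i.castSucc) + _ +
        ((finSum fun i : Fin (m + 1) => g i.castSucc) + _)
    rw [finSum_add]
    exact add_add_add_comm _ _ _ _

theorem finSum_comm {S : Type} [AddCommSemigroup S] :
    ∀ {m p : ℕ} (h : Fin (m + 1) → Fin (p + 1) → S),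
      finSum (fun k => finSum (fun l => h k l)) = finSum (fun l => finSum (fun k => h k l))
  | 0, _, _ => rfl
  | m + 1, _, h => by
    change finSum (fun k : Fin (m + 1) => finSum (fun l => h k.castSucc l)) + _ = _
    rw [finSum_comm, ← finSum_add]
    rfl

variable {S : Type} [PSemiring S]

theorem mul_finSum : ∀ {m : ℕ} (c : S) (f : Fin (m + 1) → S),
    c * finSum f = finSum (fun i => c * f i)
  | 0, _, _ => rfl
  | m + 1, c, f => by
    change c * (finSum (fun i : Fin (m + 1) => f i.castSucc) + _) = _
    rw [PSemiring.left_distrib, mul_finSum]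
    rfl

theorem finSum_mul : ∀ {m : ℕ} (c : S) (f : Fin (m + 1) → S),
    finSum f * c = finSum (fun i => f i * c)
  | 0, _, _ => rfl
  | m + 1, c, f => by
    change (finSum (fun i : Fin (m + 1) => f i.castSucc) + _) * c = _
    rw [PSemiring.right_distrib, finSum_mul]
    rfl

end FinSum

namespace Mat

variable {n : ℕ} {S : Type}

@[ext]
theorem ext {A B : Mat n S} (h : ∀ i j, A.entry i j = B.entry i j) : A = B := by
  cases A; cases B
  congr
  funext i j
  exact h i j

theorem add_entry [Add S] (A B : Mat n S) (i j : Fin (n + 1)) :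
    (A + B).entry i j = A.entry i j + B.entry i j := rfl

theorem mul_entry [Add S] [Mul S] (A B : Mat n S) (i j : Fin (n + 1)) :
    (A * B).entry i j = finSum (fun k => A.entry i k * B.entry k j) := rfl

variable [PSemiring S]

instance : PSemiring (Mat n S) where
  add_assoc _ _ _ := ext fun _ _ => add_assoc _ _ _
  add_comm _ _ := ext fun _ _ => add_comm _ _
  mul_assoc X Y Z := ext fun i j => by
    simp only [mul_entry, finSum_mul, mul_finSum, mul_assoc]
    exact finSum_comm _
  left_distrib _ _ _ := ext fun _ _ => by
    simp only [mul_entry, add_entry, PSemiring.left_distrib, finSum_add]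
  right_distrib _ _ _ := ext fun _ _ => by
    simp only [mul_entry, add_entry, PSemiring.right_distrib, finSum_add]

theorem leS_entry {X Y : Mat n S} (h : leS X Y) (i j : Fin (n + 1)) :
    leS (X.entry i j) (Y.entry i j) := by
  rcases h with rfl | ⟨C, rfl⟩
  · exact leS_refl _
  · exact leS_add_right _ _

theorem leS_mul_entry (X Y : Mat n S) (i j k : Fin (n + 1)) :
    leS (X.entry i k * Y.entry k j) ((X * Y).entry i j) :=
  leS_finSum (fun k => X.entry i k * Y.entry k j) k

theorem leS_mul_mul_entry (X Y Z : Mat n S) (i j k l : Fin (n + 1)) :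
    leS (X.entry i k * Y.entry k l * Z.entry l j) ((X * Y * Z).entry i j) :=
  leS_trans (leS_mul_right (leS_mul_entry X Y i l k) _) (leS_mul_entry _ Z i j l)

end Mat

def sandwichBiIdeal {T : Type} [Add T] [Mul T] (A : T) : Set T :=
  {X | ∃ M M', leS (M * A * M') X}

theorem isBiIdeal_sandwichBiIdeal {T : Type} [PSemiring T] (A : T) :
    IsBiIdeal (sandwichBiIdeal A) := by
  refine ⟨⟨A * A * A, A, A, leS_refl _⟩, ?_⟩
  rintro X ⟨M, M', hle⟩ s
  refine ⟨⟨M, M', leS_trans hle (leS_add_right X s)⟩, ⟨M, M' * s, ?_⟩, ⟨s * M, M', ?_⟩⟩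
  · rw [← mul_assoc]
    exact leS_mul_right hle s
  · rw [mul_assoc s, mul_assoc s]
    exact leS_mul_left hle s

theorem BiIdealFree.exists_mul_mul_leS {T : Type} [PSemiring T] (h : BiIdealFree T) (A B : T) :
    ∃ M M', leS (M * A * M') B := by
  show B ∈ sandwichBiIdeal A
  rw [h.2 _ (isBiIdeal_sandwichBiIdeal A)]
  trivial

theorem exists_leS_leS_of_leS_mul {S : Type} [PSemiring S] (hc : ∀ a b : S, a * b = b * a)
    {a b p q r s : S} (hpq : leS (p * a * q) b) (hrs : leS (r * b * s) a)
    (hps : leS (p * a * s) b) (hrq : leS (r * b * q) b) :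
    ∃ c, leS c a ∧ leS c b := by
  let _ : CommSemigroup S := { ‹PSemiring S› with mul_comm := hc }
  refine ⟨p * a * q * (r * s), leS_trans (leS_mul_right hpq _) ?_, ?_⟩
  · rwa [← mul_assoc, mul_comm b r]
  · rw [mul_mul_mul_comm, mul_comm q s, ← mul_mul_mul_comm]
    refine leS_trans (leS_mul_right hps _) ?_
    rwa [← mul_assoc, mul_comm b r]

namespace Mat

variable {n : ℕ} {S : Type}

def diagElse (a b : S) : Mat n S := ⟨fun i j => if i = j then a else b⟩

def cornerElse (a b : S) : Mat n S := ⟨fun i j => if i = 0 ∧ j = 0 then a else b⟩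

theorem exists_leS_leS_of_mul_diagElse_mul_leS [PSemiring S] (hc : ∀ a b : S, a * b = b * a)
    {a b : S} {M M' : Mat (n + 1) S} (h : leS (M * diagElse a b * M') (cornerElse a b)) :
    ∃ c, leS c a ∧ leS c b := by
  have hle (i j k l) := leS_trans (leS_mul_mul_entry M (diagElse a b) M' i j k l) (leS_entry h i j)
  have h10 : (1 : Fin (n + 2)) ≠ 0 := by simp
  have h1 := hle 1 1 1 1
  have h2 := hle 0 0 0 1
  have h3 := hle 1 0 1 1
  have h4 := hle 0 1 0 1
  simp only [diagElse, cornerElse, h10, h10.symm] at h1 h2 h3 h4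
  exact exists_leS_leS_of_leS_mul hc h1 h2 h3 h4

end Mat

/-- if `S` is commutative and `M_n(S)` is bi-ideal-free for some
`n ≥ 2` (`Mat (n+1)` has size `n+2`), then `≤_S` is downwards directed. -/
theorem stmt15 {S : Type} [PSemiring S] (hc : ∀ a b : S, a * b = b * a) (n : ℕ)
    (h : BiIdealFree (Mat (n + 1) S)) :
    ∀ a b : S, ∃ c : S, leS c a ∧ leS c b := by
  intro a b
  obtain ⟨M, M', hle⟩ := h.exists_mul_mul_leS (Mat.diagElse a b) (Mat.cornerElse a b)
  exact Mat.exists_leS_leS_of_mul_diagElse_mul_leS hc hle
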